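/- arXiv:1901.02356 — 2 statements merged into one kernel-verified Lean document; each statement's English description precedes it below -/
import Mathlib

section
/- Let (X,T) be a dynamical system with fixed points x₁, ..., xₙ (n ≥ 2). Suppose that for any neighborhoods W_i of x_i there exists a minimal point y such that for each i there is n_i ∈ ℤ₊ with T^{n_i} y ∈ W_i. Then for all neighborhoods U₁,...,Uₙ of x₁,...,xₙ, the set {(n₁,...,n_l) ∈ ℤ₊^l : ⋂_{i=1}^l T^{-n_i} U_{s(i)} ≠ ∅} is thickly syndetic for every l ∈ ℕ and every s ∈ {1,...,n}^l. -/
/-- `S ⊆ ℤ₊^l` is syndetic if there is a gap `m` such that every `a ∈ ℤ₊^l` has a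
translate `a + p`, `p ∈ {0,…,m}^l`, lying in `S`. -/
def Syndetic (l : ℕ) (S : Set (Fin l → ℕ)) : Prop :=
  ∃ m : ℕ, ∀ a : Fin l → ℕ, ∃ p : Fin l → ℕ, (∀ i, p i ≤ m) ∧ a + p ∈ S

/-- `F ⊆ ℤ₊^l` is thickly syndetic if for every `n` there is a syndetic set `S` with
`s + P_n ⊆ F` for all `s ∈ S`. -/
def ThicklySyndetic (l : ℕ) (F : Set (Fin l → ℕ)) : Prop :=
  ∀ n : ℕ, ∃ S : Set (Fin l → ℕ), Syndetic l S ∧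
    ∀ s ∈ S, ∀ p : Fin l → ℕ, (∀ i, p i ≤ n) → s + p ∈ F

/-- `y` is a minimal point of `(X,T)` if the closure of its forward orbit is a
minimal closed invariant set. -/
def IsMinimalPoint {X : Type*} [MetricSpace X] (T : X → X) (y : X) : Prop :=
  ∀ A : Set X, IsClosed A → Set.MapsTo T A A → A.Nonempty →
    A ⊆ closure (Set.range fun n : ℕ => T^[n] y) →
    A = closure (Set.range fun n : ℕ => T^[n] y)

/-- Return times of a minimal point to an open set it visits are syndetic. -/
lemma minimal_return {X : Type*} [MetricSpace X] [CompactSpace X] (T : X → X)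
    (hT : Continuous T) (y : X) (hy : IsMinimalPoint T y)
    (V : Set X) (hV : IsOpen V) (m : ℕ) (hm : T^[m] y ∈ V) :
    ∃ g : ℕ, ∀ a : ℕ, ∃ k ≤ g, T^[a + k] y ∈ V := by
  set Y := closure (Set.range fun n : ℕ => T^[n] y) with hYdef
  have hYclosed : IsClosed Y := isClosed_closure
  have hYcompact : IsCompact Y := hYclosed.isCompact
  have hcover : Y ⊆ ⋃ k : ℕ, (T^[k]) ⁻¹' V := by
    by_contra h
    obtain ⟨z, hzY, hz⟩ := Set.not_subset.mp h
    simp only [Set.mem_iUnion, Set.mem_preimage, not_exists] at hz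
    set A := Y ∩ ⋂ k : ℕ, (T^[k]) ⁻¹' Vᶜ with hA
    have hAclosed : IsClosed A := hYclosed.inter (isClosed_iInter fun k =>
      (hV.isClosed_compl).preimage (hT.iterate k))
    have hYmaps : Set.MapsTo T Y Y := by
      have hbase : Set.MapsTo T (Set.range fun n : ℕ => T^[n] y)
          (Set.range fun n : ℕ => T^[n] y) := by
        rintro _ ⟨k, rfl⟩
        exact ⟨k + 1, Function.iterate_succ_apply' T k y⟩
      exact hbase.closure hT
    have hAmaps : Set.MapsTo T A A := by
      rintro w ⟨hwY, hw⟩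
      refine ⟨hYmaps hwY, ?_⟩
      simp only [Set.mem_iInter, Set.mem_preimage, Set.mem_compl_iff] at hw ⊢
      intro k
      have h1 := hw (k + 1)
      rwa [Function.iterate_succ_apply] at h1
    have hAne : A.Nonempty := ⟨z, hzY, by
      simp only [Set.mem_iInter, Set.mem_preimage, Set.mem_compl_iff]; exact hz⟩
    have hAY := hy A hAclosed hAmaps hAne Set.inter_subset_left
    have hyA : y ∈ A := hAY ▸ subset_closure ⟨0, rfl⟩
    have h2 := hyA.2
    simp only [Set.mem_iInter, Set.mem_preimage, Set.mem_compl_iff] at h2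
    exact h2 m hm
  obtain ⟨t, ht⟩ := hYcompact.elim_finite_subcover (fun k : ℕ => (T^[k]) ⁻¹' V)
    (fun k => hV.preimage (hT.iterate k)) hcover
  refine ⟨t.sup id, fun a => ?_⟩
  have haY : T^[a] y ∈ Y := subset_closure ⟨a, rfl⟩
  have hmem := ht haY
  simp only [Set.mem_iUnion, Set.mem_preimage, Finset.mem_coe] at hmem
  obtain ⟨k, hkt, hk⟩ := hmem
  refine ⟨k, Finset.le_sup (f := id) hkt, ?_⟩
  rwa [add_comm, Function.iterate_add_apply]

/-- let `x₁,…,xₙ` (`n ≥ 2`) be fixed points such that for all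
neighbourhoods `Wᵢ` of the `xᵢ` some minimal point `y` visits all `Wᵢ`. Then for
any neighbourhoods `Uᵢ` of the `xᵢ`, every `l` and every `s : {1,…,l} → {1,…,n}`,
the set `{(n₁,…,n_l) ∈ ℤ₊^l : ⋂ᵢ T^{-nᵢ} U_{s(i)} ≠ ∅}` is thickly syndetic. -/
theorem stmt_5 {X : Type*} [MetricSpace X] [CompactSpace X] (T : X → X)
    (hT : Continuous T) (n : ℕ) (hn : 2 ≤ n)
    (x : Fin n → X) (hfix : ∀ i, T (x i) = x i)
    (hmin : ∀ W : Fin n → Set X, (∀ i, IsOpen (W i)) → (∀ i, x i ∈ W i) →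
      ∃ y : X, IsMinimalPoint T y ∧ ∀ i, ∃ m : ℕ, T^[m] y ∈ W i) :
    ∀ U : Fin n → Set X, (∀ i, IsOpen (U i)) → (∀ i, x i ∈ U i) →
      ∀ (l : ℕ) (s : Fin l → Fin n),
        ThicklySyndetic l {m : Fin l → ℕ | (⋂ i, T^[m i] ⁻¹' U (s i)).Nonempty} := by
  intro U hUopen hUmem l s N
  set V : Fin n → Set X := fun j => ⋂ k ∈ Finset.range (N + 1), (T^[k]) ⁻¹' U j with hV
  have hVopen : ∀ j, IsOpen (V j) := fun j =>
    isOpen_biInter_finset fun k _ => (hUopen j).preimage (hT.iterate k)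
  have hfixIter : ∀ j k, T^[k] (x j) = x j := by
    intro j k
    induction k with
    | zero => rfl
    | succ k ih => rw [Function.iterate_succ_apply', ih, hfix]
  have hVmem : ∀ j, x j ∈ V j := fun j => by
    simp only [hV, Set.mem_iInter, Set.mem_preimage]
    intro k _
    rw [hfixIter]
    exact hUmem j
  have hVsub : ∀ j, ∀ z ∈ V j, ∀ p ≤ N, T^[p] z ∈ U j := by
    intro j z hz p hp
    simp only [hV, Set.mem_iInter, Set.mem_preimage] at hz
    exact hz p (Finset.mem_range.mpr (Nat.lt_succ_of_le hp))
  obtain ⟨y, hymin, hyvisit⟩ := hmin V hVopen hVmem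
  have hret : ∀ j, ∃ g : ℕ, ∀ a : ℕ, ∃ k ≤ g, T^[a + k] y ∈ V j := fun j => by
    obtain ⟨m, hm⟩ := hyvisit j
    exact minimal_return T hT y hymin (V j) (hVopen j) m hm
  choose g hg using hret
  refine ⟨{m : Fin l → ℕ | ∀ i, T^[m i] y ∈ V (s i)}, ⟨Finset.univ.sup g, fun a => ?_⟩, ?_⟩
  · have h1 := fun i => hg (s i) (a i)
    choose p hp1 hp2 using h1
    refine ⟨p, fun i => le_trans (hp1 i) (Finset.le_sup (Finset.mem_univ (s i))), fun i => ?_⟩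
    simpa using hp2 i
  · intro m hm p hp
    refine ⟨y, Set.mem_iInter.mpr fun i => ?_⟩
    show T^[m i + p i] y ∈ U (s i)
    rw [add_comm, Function.iterate_add_apply]
    exact hVsub (s i) _ (hm i) (p i) (hp i)
end

section
/- A dynamical system (X,T) is equicontinuous if and only if the regionally proximal relation Q(X,T) is trivial, i.e., Q(X,T) = Δ_X. -/
/-!
An equicontinuous surjection `T` of a compact space is recurrent: if `T ∘ S = id`, compactness
gives close points `S^[i] z`, `S^[j] z` with `j > i + n`, and applying `T^[j]` makes `z` close
to `T^[j - i] z`. Recurrence of pairs makes `T` uniformly distal (pairs that ever come close were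
close to begin with), and on a compact space uniform distality is the same as triviality of
`Q(X,T)`. Conversely, if `Q(X,T)` is trivial then `T` is uniformly distal, hence
injective; uniform distality of `T` is equicontinuity of `T⁻¹`, which is therefore uniformly
distal, which in turn is equicontinuity of `T`.
-/

variable {X : Type*} [MetricSpace X]

/-- `(x,y)` is regionally proximal. -/
def RegProximal (T : X → X) (x y : X) : Prop :=
  ∀ ε > (0 : ℝ), ∃ (x' y' : X) (n : ℕ),
    dist x x' < ε ∧ dist y y' < ε ∧ dist (T^[n] x') (T^[n] y') < ε

/-- `(X,T)` is equicontinuous. -/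
def Equicontinuous' (T : X → X) : Prop :=
  ∀ ε > (0 : ℝ), ∃ δ > (0 : ℝ), ∀ x y : X, dist x y < δ →
    ∀ n : ℕ, dist (T^[n] x) (T^[n] y) < ε

open Filter Function Metric

def UniformlyDistal (T : X → X) : Prop :=
  ∀ ε > (0 : ℝ), ∃ δ > (0 : ℝ), ∀ x y : X, ∀ n : ℕ, dist (T^[n] x) (T^[n] y) < δ → dist x y < ε

lemma exists_add_lt_dist_lt [CompactSpace X] (u : ℕ → X) {ε : ℝ} (hε : 0 < ε) (n : ℕ) :
    ∃ i j, i + n < j ∧ dist (u i) (u j) < ε := by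
  obtain ⟨p, -, φ, hφ, hlim⟩ := isCompact_univ.tendsto_subseq fun k => Set.mem_univ (u k)
  obtain ⟨N, hN⟩ := cauchySeq_iff'.1 hlim.cauchySeq ε hε
  refine ⟨φ N, φ (n + 1 + N), ?_, (dist_comm _ _).trans_lt (hN _ (by omega))⟩
  have := hφ.add_le_nat (n + 1) N
  omega

namespace Equicontinuous'

variable {Y : Type*} [MetricSpace Y]

lemma prodMap {T : X → X} {S : Y → Y} (hT : Equicontinuous' T) (hS : Equicontinuous' S) :
    Equicontinuous' (Prod.map T S) := by
  intro ε hε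
  obtain ⟨δ₁, hδ₁, hTδ⟩ := hT ε hε
  obtain ⟨δ₂, hδ₂, hSδ⟩ := hS ε hε
  refine ⟨min δ₁ δ₂, lt_min hδ₁ hδ₂, fun x y hxy n => ?_⟩
  simp only [Prod.dist_eq, lt_min_iff, max_lt_iff] at hxy
  rw [Prod.map_iterate, Prod.dist_eq, max_lt_iff]
  exact ⟨hTδ _ _ hxy.1.1 n, hSδ _ _ hxy.2.2 n⟩

lemma exists_le_dist_iterate_lt [CompactSpace X] {T : X → X} (hT : Equicontinuous' T)
    (hsurj : Surjective T) (z : X) {ε : ℝ} (hε : 0 < ε) (n : ℕ) :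
    ∃ N ≥ n, dist z (T^[N] z) < ε := by
  obtain ⟨S, hTS⟩ := hsurj.hasRightInverse
  obtain ⟨δ, hδ, hTδ⟩ := hT ε hε
  obtain ⟨i, j, hij, hclose⟩ := exists_add_lt_dist_lt (fun k => S^[k] z) hδ n
  refine ⟨j - i, by omega, ?_⟩
  have hret : T^[j] (S^[i] z) = T^[j - i] z := by
    rw [show j = (j - i) + i by omega, iterate_add_apply, (hTS.iterate i) z, Nat.add_sub_cancel]
  simpa [hret, (hTS.iterate j) z, dist_comm] using hTδ _ _ hclose j

lemma uniformlyDistal [CompactSpace X] {T : X → X} (hT : Equicontinuous' T)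
    (hsurj : Surjective T) : UniformlyDistal T := by
  intro ε hε
  obtain ⟨δ, hδ, hTδ⟩ := hT (ε / 3) (by positivity)
  refine ⟨δ, hδ, fun x y n hn => ?_⟩
  obtain ⟨N, hNn, hN⟩ := (hT.prodMap hT).exists_le_dist_iterate_lt (hsurj.prodMap hsurj)
    (x, y) (by positivity : 0 < ε / 3) n
  simp only [Prod.map_iterate, Prod.dist_eq, max_lt_iff, Prod.map_fst, Prod.map_snd] at hN
  have hlate : dist (T^[N] x) (T^[N] y) < ε / 3 := by
    simpa [← iterate_add_apply, Nat.sub_add_cancel hNn] using hTδ _ _ hn (N - n)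
  calc dist x y ≤ dist x (T^[N] x) + dist (T^[N] x) (T^[N] y) + dist (T^[N] y) y :=
        dist_triangle4 _ _ _ _
    _ < ε / 3 + ε / 3 + ε / 3 := by
        rw [dist_comm (T^[N] y)]
        exact add_lt_add (add_lt_add hN.1 hlate) hN.2
    _ = ε := by ring

end Equicontinuous'

namespace UniformlyDistal

lemma equicontinuous_of_leftInverse {T S : X → X} (hT : UniformlyDistal T)
    (hTS : LeftInverse T S) : Equicontinuous' S := by
  intro ε hε
  obtain ⟨δ, hδ, hTδ⟩ := hT ε hε
  exact ⟨δ, hδ, fun x y h n => hTδ _ _ n (by simpa [(hTS.iterate n) _] using h)⟩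

lemma injective {T : X → X} (hT : UniformlyDistal T) : Injective T := by
  refine fun x y hxy => eq_of_forall_dist_le fun ε hε => ?_
  obtain ⟨δ, hδ, hTδ⟩ := hT ε hε
  exact (hTδ x y 1 (by simpa [hxy] using hδ)).le

lemma eq_of_regProximal {T : X → X} (hT : UniformlyDistal T) {x y : X}
    (hxy : RegProximal T x y) : x = y := by
  refine eq_of_forall_dist_le fun ε hε => ?_
  obtain ⟨δ, hδ, hTδ⟩ := hT (ε / 3) (by positivity)
  obtain ⟨x', y', n, hx, hy, hn⟩ := hxy (min δ (ε / 3)) (lt_min hδ (by positivity))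
  have hx'y' := hTδ x' y' n (hn.trans_le (min_le_left _ _))
  calc dist x y ≤ dist x x' + dist x' y' + dist y' y := dist_triangle4 _ _ _ _
    _ ≤ ε / 3 + ε / 3 + ε / 3 := by
        rw [dist_comm y']
        exact add_le_add (add_le_add (hx.le.trans (min_le_right _ _)) hx'y'.le)
          (hy.le.trans (min_le_right _ _))
    _ = ε := by ring

end UniformlyDistal

lemma uniformlyDistal_of_forall_regProximal_eq [CompactSpace X] {T : X → X}
    (hQ : ∀ x y : X, RegProximal T x y → x = y) : UniformlyDistal T := by
  by_contra hT
  rw [UniformlyDistal] at hT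
  push Not at hT
  obtain ⟨ε, hε, hT⟩ := hT
  choose u v n hn hdist using fun k : ℕ => hT (1 / (k + 1)) Nat.one_div_pos_of_nat
  obtain ⟨p, -, hp⟩ := isCompact_univ.exists_mapClusterPt (f := atTop) (u := fun k => (u k, v k))
    (tendsto_principal.2 (Eventually.of_forall fun _ => Set.mem_univ _))
  have hfar : ε ≤ dist p.1 p.2 :=
    (isClosed_le continuous_const (continuous_fst.dist continuous_snd)).mem_of_mapClusterPt
      (s := {q : X × X | ε ≤ dist q.1 q.2}) hp (Eventually.of_forall hdist)
  have hreg : RegProximal T p.1 p.2 := by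
    intro δ hδ
    obtain ⟨k, hk, hsmall⟩ := ((hp.frequently (ball_mem_nhds p hδ)).and_eventually
      (tendsto_one_div_add_atTop_nhds_zero_nat.eventually (gt_mem_nhds hδ))).exists
    rw [Prod.dist_eq, max_lt_iff] at hk
    exact ⟨u k, v k, n k, (dist_comm _ _).trans_lt hk.1, (dist_comm _ _).trans_lt hk.2,
      (hn k).trans hsmall⟩
  rw [hQ _ _ hreg, dist_self] at hfar
  exact hfar.not_gt hε

theorem stmt_8_general {Y : Type*} [MetricSpace Y] [CompactSpace Y] (T : Y → Y)
    (hsurj : Function.Surjective T) :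
    Equicontinuous' T ↔ (∀ x y : Y, RegProximal T x y → x = y) := by
  refine ⟨fun hT x y => (hT.uniformlyDistal hsurj).eq_of_regProximal, fun hQ => ?_⟩
  have hT : UniformlyDistal T := uniformlyDistal_of_forall_regProximal_eq hQ
  obtain ⟨S, hST, hTS⟩ := bijective_iff_has_inverse.1 ⟨hT.injective, hsurj⟩
  have hS : Equicontinuous' S := hT.equicontinuous_of_leftInverse hTS
  exact (hS.uniformlyDistal hST.surjective).equicontinuous_of_leftInverse hST

/-- a dynamical system `(X,T)` is equicontinuous iff the regionally
proximal relation `Q(X,T)` is trivial, i.e. `Q(X,T) = Δ_X`. -/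
theorem stmt_8 {Y : Type*} [MetricSpace Y] [CompactSpace Y] (T : Y → Y)
    (hT : Continuous T) (hsurj : Function.Surjective T) :
    Equicontinuous' T ↔ (∀ x y : Y, RegProximal T x y → x = y) :=
  stmt_8_general T hsurj
end
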